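/- arXiv:math/9909195 — 9 statements merged into one kernel-verified Lean document; each statement's English description precedes it below -/
import Mathlib

section
/- Let P(x) = A + 4Bx + 6Cx^2 + 4Dx^3 + Ex^4 and R(x,y) = A + 2B(x+y) + 3C(x^2+y^2) + 2Dxy(x+y) + Ex^2y^2, and define R̂(x,y) = -4B^2 + 4(AD-3BC)(x+y) + 2(AE+2BD-9C^2)(x^2+y^2) + 4(BE-3CD)xy(x+y) - 4D^2x^2y^2 - (AE+4BD-9C^2)(x-y)^2. Then R(x,y)^2 + (x-y)^2·R̂(x,y) = P(x)P(y) for all complex x, y. -/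
theorem Rhat_fundamental_relation (A B C D E : ℂ) (x y : ℂ) :
    (A + 2*B*(x + y) + 3*C*(x^2 + y^2) + 2*D*(x*y)*(x + y) + E*x^2*y^2)^2
      + (x - y)^2 *
        (-4*B^2 + 4*(A*D - 3*B*C)*(x + y) + 2*(A*E + 2*B*D - 9*C^2)*(x^2 + y^2)
          + 4*(B*E - 3*C*D)*(x*y)*(x + y) - 4*D^2*x^2*y^2
          - (A*E + 4*B*D - 9*C^2)*(x - y)^2)
      = (A + 4*B*x + 6*C*x^2 + 4*D*x^3 + E*x^4)
        * (A + 4*B*y + 6*C*y^2 + 4*D*y^3 + E*y^4) := by ring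
end

section
/- Let P(x) = A + 4Bx + 6Cx^2 + 4Dx^3 + Ex^4 and R(x,y) = A + 2B(x+y) + 3C(x^2+y^2) + 2Dxy(x+y) + Ex^2y^2. If F(x,y) = P(x)P(y) - R(x,y)^2, then F and its first partial derivatives vanish on the diagonal x = y; equivalently (x-y)^2 divides F(x,y) in ℂ[x,y]. -/
open MvPolynomial

lemma aux_eval_diag (t : ℂ) (Q : MvPolynomial (Fin 2) ℂ) :
    eval (fun _ => t) ((X 0 - X 1) ^ 2 * Q) = 0 := by
  simp

lemma aux_pderiv_diag (t : ℂ) (i : Fin 2) (Q : MvPolynomial (Fin 2) ℂ) :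
    eval (fun _ => t) (pderiv i ((X 0 - X 1) ^ 2 * Q)) = 0 := by
  rw [pow_two, pderiv_mul, pderiv_mul]
  simp only [map_mul, map_add, map_sub, eval_X]
  ring

theorem F_vanishes_on_diagonal_and_sq_divides (A B C D E : ℂ)
    (Px Py R F : MvPolynomial (Fin 2) ℂ)
    (hPx : Px = MvPolynomial.C A + MvPolynomial.C (4*B) * X 0
        + MvPolynomial.C (6*C) * X 0 ^ 2 + MvPolynomial.C (4*D) * X 0 ^ 3
        + MvPolynomial.C E * X 0 ^ 4)
    (hPy : Py = MvPolynomial.C A + MvPolynomial.C (4*B) * X 1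
        + MvPolynomial.C (6*C) * X 1 ^ 2 + MvPolynomial.C (4*D) * X 1 ^ 3
        + MvPolynomial.C E * X 1 ^ 4)
    (hR : R = MvPolynomial.C A + MvPolynomial.C (2*B) * (X 0 + X 1)
        + MvPolynomial.C (3*C) * (X 0 ^ 2 + X 1 ^ 2)
        + MvPolynomial.C (2*D) * (X 0 * X 1) * (X 0 + X 1)
        + MvPolynomial.C E * X 0 ^ 2 * X 1 ^ 2)
    (hF : F = Px * Py - R ^ 2) :
    (∀ t : ℂ, eval (fun _ => t) F = 0
      ∧ eval (fun _ => t) (pderiv 0 F) = 0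
      ∧ eval (fun _ => t) (pderiv 1 F) = 0)
    ∧ (X 0 - X 1) ^ 2 ∣ F := by
  have hfac : F = (X 0 - X 1) ^ 2 *
      (MvPolynomial.C (-4*B^2)
      + MvPolynomial.C (4*A*D - 12*B*C) * (X 0 + X 1)
      + MvPolynomial.C (A*E - 9*C^2) * (X 0 ^ 2 + X 1 ^ 2)
      + MvPolynomial.C (8*B*D + 2*A*E - 18*C^2) * (X 0 * X 1)
      + MvPolynomial.C (4*B*E - 12*C*D) * (X 0 * X 1 ^ 2 + X 0 ^ 2 * X 1)
      + MvPolynomial.C (-4*D^2) * (X 0 ^ 2 * X 1 ^ 2)) := by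
    subst hF hPx hPy hR
    simp only [map_mul, map_add, map_sub, map_neg, map_pow, map_ofNat]
    ring
  exact ⟨fun t => ⟨hfac ▸ aux_eval_diag t _, hfac ▸ aux_pderiv_diag t 0 _,
    hfac ▸ aux_pderiv_diag t 1 _⟩, _, hfac⟩
end

section
/- Write Φ_θ(x,y) = a_θ(y)x^2 + 2b_θ(y)x + c_θ(y) with a_θ(x) = (2Eθ-4D^2)x^2 + (4Dθ+4(BE-3CD))x + (AE-(θ-3C)^2), c_θ(x) = (AE-(θ-3C)^2)x^2 + (4Bθ+4(AD-3BC))x + (2Aθ-4B^2), b_θ(x) = (2Dθ+2(BE-3CD))x^2 + (θ^2-9C^2+AE+4BD)x + (2Bθ+2AD-6BC). Then the discriminant G_θ(x) = b_θ(x)^2 - a_θ(x)c_θ(x) satisfies G_θ(x) = p(θ)P(x), where p(θ) = 2θ(θ-3C)^2 + 2θ(4BD-AE) + 4B^2E + 4AD^2 - 24BCD and P(x) = A + 4Bx + 6Cx^2 + 4Dx^3 + Ex^4. -/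
theorem discriminant_eq_p_times_P (A B C D E θ : ℂ) (x : ℂ) :
    ((2*D*θ + 2*(B*E - 3*C*D))*x^2 + (θ^2 - 9*C^2 + A*E + 4*B*D)*x
        + (2*B*θ + 2*A*D - 6*B*C))^2
      - ((2*E*θ - 4*D^2)*x^2 + (4*D*θ + 4*(B*E - 3*C*D))*x + (A*E - (θ - 3*C)^2))
        * ((A*E - (θ - 3*C)^2)*x^2 + (4*B*θ + 4*(A*D - 3*B*C))*x + (2*A*θ - 4*B^2))
      = (2*θ*(θ - 3*C)^2 + 2*θ*(4*B*D - A*E) + 4*B^2*E + 4*A*D^2 - 24*B*C*D)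
        * (A + 4*B*x + 6*C*x^2 + 4*D*x^3 + E*x^4) := by ring
end

section
/- Let x, y, u, v be differentiable complex-valued functions of a real parameter with u^2 = P(x), v^2 = P(y), and suppose Φ_θ(x(t),y(t)) = 0 identically for some fixed θ with p(θ) ≠ 0, where the partial derivatives satisfy (1/2)∂Φ_θ/∂x = ρ√(G_θ(y)) and (1/2)∂Φ_θ/∂y = σ√(G_θ(x)) with ρ,σ ∈ {±1}. Then along the curve, σ·(dx/dt)/u + ρ·(dy/dt)/v = 0, i.e. the curve Φ_θ = 0 solves dx/√P(x) ± dy/√P(y) = 0. -/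
/-!
Differentiating `Φ_θ (x t) (y t) = 0` gives `∂ₓΦ_θ · x' + ∂ᵧΦ_θ · y' = 0`. Inserting the
partial derivatives `2ρ√p(θ) v` and `2σ√p(θ) u`, cancelling `√p(θ) ≠ 0` and multiplying by
`ρσ / (u v)` (recall `ρ² = σ² = 1`) turns this into `σ x'/u + ρ y'/v = 0`.
-/

theorem DifferentiableAt.hasDerivAt_uncurry_comp {𝕜 𝕜' F : Type*} [NontriviallyNormedField 𝕜]
    [NontriviallyNormedField 𝕜'] [NormedAlgebra 𝕜 𝕜'] [NormedAddCommGroup F] [NormedSpace 𝕜' F]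
    [NormedSpace 𝕜 F] [IsScalarTower 𝕜 𝕜' F]
    {Φ : 𝕜' → 𝕜' → F} {x y : 𝕜 → 𝕜'} {x' y' : 𝕜'} {t : 𝕜}
    (hΦ : DifferentiableAt 𝕜' (Function.uncurry Φ) (x t, y t))
    (hx : HasDerivAt x x' t) (hy : HasDerivAt y y' t) :
    HasDerivAt (fun τ => Φ (x τ) (y τ))
      (x' • deriv (Φ · (y t)) (x t) + y' • deriv (Φ (x t) ·) (y t)) t := by
  set L := fderiv 𝕜' (Function.uncurry Φ) (x t, y t)
  have hL : HasFDerivAt (Function.uncurry Φ) L (x t, y t) := hΦ.hasFDerivAt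
  have h₁ : HasDerivAt (Φ · (y t)) (L (1, 0)) (x t) := by
    have hγ : HasDerivAt (fun s => (s, y t)) ((1 : 𝕜'), (0 : 𝕜')) (x t) :=
      (hasDerivAt_id _).prodMk (hasDerivAt_const _ _)
    exact hL.comp_hasDerivAt (x t) hγ
  have h₂ : HasDerivAt (Φ (x t) ·) (L (0, 1)) (y t) := by
    have hγ : HasDerivAt (fun s => (x t, s)) ((0 : 𝕜'), (1 : 𝕜')) (y t) :=
      (hasDerivAt_const _ _).prodMk (hasDerivAt_id _)
    exact hL.comp_hasDerivAt (y t) hγ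
  have hcurve : HasDerivAt (fun τ => Φ (x τ) (y τ)) (L (x', y')) t := by
    exact (hL.restrictScalars 𝕜).comp_hasDerivAt t (hx.prodMk hy)
  convert hcurve using 1
  rw [h₁.deriv, h₂.deriv, ← L.map_smul, ← L.map_smul, ← L.map_add]
  simp

theorem sign_div_add_sign_div_eq_zero {K : Type*} [Field K] {ρ σ c u v a b : K}
    (hρ : ρ ^ 2 = 1) (hσ : σ ^ 2 = 1) (hc : c ≠ 0) (hu : u ≠ 0) (hv : v ≠ 0)
    (h : ρ * (c * v) * a + σ * (c * u) * b = 0) :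
    σ * a / u + ρ * b / v = 0 := by
  have hvu : σ * v * a + ρ * u * b = 0 := by
    refine mul_left_cancel₀ hc ?_
    linear_combination ρ * σ * h - c * σ * v * a * hρ - c * ρ * u * b * hσ
  field_simp
  linear_combination hvu

theorem euler_differential_relation_general (A B C D E θ ρ σ sp : ℂ)
    (Φ : ℂ → ℂ → ℂ)
    (x y u v : ℝ → ℂ)
    (hΦ : ∀ s t, Φ s t = -(s - t)^2*θ^2
        + 2*(A + 2*B*(s + t) + 3*C*(s^2 + t^2) + 2*D*(s*t)*(s + t) + E*s^2*t^2)*θ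
        + (-4*B^2 + 4*(A*D - 3*B*C)*(s + t) + 2*(A*E + 2*B*D - 9*C^2)*(s^2 + t^2)
            + 4*(B*E - 3*C*D)*(s*t)*(s + t) - 4*D^2*s^2*t^2
            - (A*E + 4*B*D - 9*C^2)*(s - t)^2))
    (hρ : ρ^2 = 1) (hσ : σ^2 = 1)
    (hsp : sp^2 = 2*θ*(θ - 3*C)^2 + 2*θ*(4*B*D - A*E) + 4*B^2*E + 4*A*D^2 - 24*B*C*D)
    (hp : 2*θ*(θ - 3*C)^2 + 2*θ*(4*B*D - A*E) + 4*B^2*E + 4*A*D^2 - 24*B*C*D ≠ 0)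
    (hx : Differentiable ℝ x) (hy : Differentiable ℝ y)
    (hu0 : ∀ t, u t ≠ 0) (hv0 : ∀ t, v t ≠ 0)
    (hcurve : ∀ t, Φ (x t) (y t) = 0)
    (hdx : ∀ t, (1/2) * deriv (fun s => Φ s (y t)) (x t) = ρ * (sp * v t))
    (hdy : ∀ t, (1/2) * deriv (fun s => Φ (x t) s) (y t) = σ * (sp * u t)) :
    ∀ t, σ * (deriv x t) / u t + ρ * (deriv y t) / v t = 0 := by
  intro t
  have hsp0 : sp ≠ 0 := by
    rintro rfl
    exact hp (by rw [← hsp]; ring)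
  have hΦdiff : Differentiable ℂ (Function.uncurry Φ) := by
    simp only [Function.uncurry_def, hΦ]
    fun_prop
  have hchain := (hΦdiff (x t, y t)).hasDerivAt_uncurry_comp (hx t).hasDerivAt (hy t).hasDerivAt
  have hflat : deriv (fun τ => Φ (x τ) (y τ)) t = 0 := by simp [hcurve]
  rw [hchain.deriv, smul_eq_mul, smul_eq_mul] at hflat
  refine sign_div_add_sign_div_eq_zero hρ hσ hsp0 (hu0 t) (hv0 t) ?_
  linear_combination (1/2 : ℂ) * hflat - deriv x t * hdx t - deriv y t * hdy t

theorem euler_differential_relation (A B C D E θ ρ σ sp : ℂ)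
    (Φ : ℂ → ℂ → ℂ) (P : ℂ → ℂ)
    (x y u v : ℝ → ℂ)
    (hP : ∀ t, P t = A + 4*B*t + 6*C*t^2 + 4*D*t^3 + E*t^4)
    (hΦ : ∀ s t, Φ s t = -(s - t)^2*θ^2
        + 2*(A + 2*B*(s + t) + 3*C*(s^2 + t^2) + 2*D*(s*t)*(s + t) + E*s^2*t^2)*θ
        + (-4*B^2 + 4*(A*D - 3*B*C)*(s + t) + 2*(A*E + 2*B*D - 9*C^2)*(s^2 + t^2)
            + 4*(B*E - 3*C*D)*(s*t)*(s + t) - 4*D^2*s^2*t^2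
            - (A*E + 4*B*D - 9*C^2)*(s - t)^2))
    (hρ : ρ^2 = 1) (hσ : σ^2 = 1)
    (hsp : sp^2 = 2*θ*(θ - 3*C)^2 + 2*θ*(4*B*D - A*E) + 4*B^2*E + 4*A*D^2 - 24*B*C*D)
    (hp : 2*θ*(θ - 3*C)^2 + 2*θ*(4*B*D - A*E) + 4*B^2*E + 4*A*D^2 - 24*B*C*D ≠ 0)
    (hx : Differentiable ℝ x) (hy : Differentiable ℝ y)
    (hu2 : ∀ t, (u t)^2 = P (x t)) (hv2 : ∀ t, (v t)^2 = P (y t))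
    (hu0 : ∀ t, u t ≠ 0) (hv0 : ∀ t, v t ≠ 0)
    (hcurve : ∀ t, Φ (x t) (y t) = 0)
    (hdx : ∀ t, (1/2) * deriv (fun s => Φ s (y t)) (x t) = ρ * (sp * v t))
    (hdy : ∀ t, (1/2) * deriv (fun s => Φ (x t) s) (y t) = σ * (sp * u t)) :
    ∀ t, σ * (deriv x t) / u t + ρ * (deriv y t) / v t = 0 :=
  euler_differential_relation_general A B C D E θ ρ σ sp Φ x y u v hΦ hρ hσ hsp hp hx hy hu0 hv0
    hcurve hdx hdy
end

section
/- With notation as in the Kowalewski case (c₁=c₂=2, c₃=1, a₃=0), setting q = z² - a(w - ka), along any solution of the ODE system one has dq/dt = -iH₃(t)q(t), and consequently |q(t)|² = q(t)·conj(q(t)) is constant in t. -/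
/-!
In the complex coordinates the equations for `H₁, H₂` and `h₁, h₂` read
`z' = -i H₃ z / 2 + i a h₃ / 2` and `w' = -i H₃ w + i h₃ z + i k H₃ a`.
Hence in `q' = 2 z z' - a w'` the `h₃`-terms cancel and `q' = -i H₃ q`.
Since the coefficient `-i H₃` is purely imaginary, `d/dt (q q̄) = 2 Re(-i H₃) q q̄ = 0`.
-/

open Complex ComplexConjugate

theorem HasDerivAt.ofReal_add_I_mul {f g : ℝ → ℝ} {f' g' t : ℝ}
    (hf : HasDerivAt f f' t) (hg : HasDerivAt g g' t) :
    HasDerivAt (fun s => (f s : ℂ) + I * g s) (f' + I * g') t :=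
  hf.ofReal_comp.add (hg.ofReal_comp.const_mul I)

theorem mul_conj_eq_of_hasDerivAt_eq_mul {q c : ℝ → ℂ}
    (hq : ∀ t, HasDerivAt q (c t * q t) t) (hc : ∀ t, (c t).re = 0) (t₁ t₂ : ℝ) :
    q t₁ * conj (q t₁) = q t₂ * conj (q t₂) := by
  have hderiv : ∀ t, HasDerivAt (fun s => q s * conj (q s)) 0 t := fun t => by
    have hconj : conj (c t) = -c t := by
      apply Complex.ext <;> simp [hc t]
    refine ((hq t).mul (hq t).star).congr_deriv ?_
    rw [star_mul', Complex.star_def, hconj]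
    ring
  exact is_const_of_deriv_eq_zero (fun t => (hderiv t).differentiableAt)
    (fun t => (hderiv t).deriv) t₁ t₂

section Kowalewski

variable {k a₁ a₂ t : ℝ} {h₁ h₂ h₃ H₁ H₂ H₃ : ℝ → ℝ} {z w : ℝ → ℂ}

theorem kowalewski_hasDerivAt_z
    (e4 : HasDerivAt H₁ ((1/2) * H₂ t * H₃ t - a₂ * h₃ t) t)
    (e5 : HasDerivAt H₂ (-(1/2) * H₁ t * H₃ t + a₁ * h₃ t) t)
    (hz : ∀ s, z s = ((H₁ s : ℂ) + I * (H₂ s : ℂ)) / 2) :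
    HasDerivAt z (-I * H₃ t * z t / 2 + I * (a₁ + I * a₂) * h₃ t / 2) t := by
  refine (((e4.ofReal_add_I_mul e5).div_const 2).congr_of_eventuallyEq
    (.of_forall hz)).congr_deriv ?_
  rw [hz]
  push_cast
  linear_combination ((H₂ t : ℂ) * H₃ t / 4 - a₂ * h₃ t / 2) * I_sq

theorem kowalewski_hasDerivAt_w
    (e1 : HasDerivAt h₁ (H₃ t * h₂ t - (1/2) * H₂ t * h₃ t - k * a₂ * H₃ t) t)
    (e2 : HasDerivAt h₂ ((1/2) * H₁ t * h₃ t - H₃ t * h₁ t + k * a₁ * H₃ t) t)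
    (hz : ∀ s, z s = ((H₁ s : ℂ) + I * (H₂ s : ℂ)) / 2)
    (hw : ∀ s, w s = (h₁ s : ℂ) + I * (h₂ s : ℂ)) :
    HasDerivAt w
      (-I * H₃ t * w t + I * h₃ t * z t + I * k * H₃ t * (a₁ + I * a₂)) t := by
  refine ((e1.ofReal_add_I_mul e2).congr_of_eventuallyEq (.of_forall hw)).congr_deriv ?_
  rw [hz, hw]
  push_cast
  linear_combination ((H₃ t : ℂ) * h₂ t - H₂ t * h₃ t / 2 - k * a₂ * H₃ t) * I_sq

end Kowalewski

theorem kowalewski_integral_of_motion_general (k a₁ a₂ : ℝ)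
    (h₁ h₂ h₃ H₁ H₂ H₃ : ℝ → ℝ)
    (e1 : ∀ t, HasDerivAt h₁ (H₃ t * h₂ t - (1/2) * H₂ t * h₃ t - k * a₂ * H₃ t) t)
    (e2 : ∀ t, HasDerivAt h₂ ((1/2) * H₁ t * h₃ t - H₃ t * h₁ t + k * a₁ * H₃ t) t)
    (e4 : ∀ t, HasDerivAt H₁ ((1/2) * H₂ t * H₃ t - a₂ * h₃ t) t)
    (e5 : ∀ t, HasDerivAt H₂ (-(1/2) * H₁ t * H₃ t + a₁ * h₃ t) t)
    (z w q : ℝ → ℂ) (a : ℂ)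
    (hz : ∀ t, z t = ((H₁ t : ℂ) + Complex.I * (H₂ t : ℂ)) / 2)
    (hw : ∀ t, w t = (h₁ t : ℂ) + Complex.I * (h₂ t : ℂ))
    (ha : a = (a₁ : ℂ) + Complex.I * (a₂ : ℂ))
    (hq : ∀ t, q t = (z t)^2 - a * (w t - (k : ℂ) * a)) :
    (∀ t, HasDerivAt q (-Complex.I * (H₃ t : ℂ) * q t) t)
    ∧ ∀ t₁ t₂ : ℝ, q t₁ * (starRingEnd ℂ) (q t₁) = q t₂ * (starRingEnd ℂ) (q t₂) := by
  subst ha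
  have hq' : ∀ t, HasDerivAt q (-I * H₃ t * q t) t := fun t => by
    have hz' := kowalewski_hasDerivAt_z (e4 t) (e5 t) hz
    have hw' := kowalewski_hasDerivAt_w (e1 t) (e2 t) hz hw
    refine (((hz'.pow 2).sub ((hw'.sub_const _).const_mul _)).congr_of_eventuallyEq
      (.of_forall hq)).congr_deriv ?_
    rw [hq]
    push_cast
    ring
  exact ⟨hq', mul_conj_eq_of_hasDerivAt_eq_mul hq' fun t => by simp⟩

theorem kowalewski_integral_of_motion (k a₁ a₂ : ℝ)
    (h₁ h₂ h₃ H₁ H₂ H₃ : ℝ → ℝ)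
    (e1 : ∀ t, HasDerivAt h₁ (H₃ t * h₂ t - (1/2) * H₂ t * h₃ t - k * a₂ * H₃ t) t)
    (e2 : ∀ t, HasDerivAt h₂ ((1/2) * H₁ t * h₃ t - H₃ t * h₁ t + k * a₁ * H₃ t) t)
    (e3 : ∀ t, HasDerivAt h₃ ((1/2) * (H₂ t * h₁ t - H₁ t * h₂ t)
        + k * (a₂ * H₁ t - a₁ * H₂ t)) t)
    (e4 : ∀ t, HasDerivAt H₁ ((1/2) * H₂ t * H₃ t - a₂ * h₃ t) t)
    (e5 : ∀ t, HasDerivAt H₂ (-(1/2) * H₁ t * H₃ t + a₁ * h₃ t) t)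
    (e6 : ∀ t, HasDerivAt H₃ (a₂ * h₁ t - a₁ * h₂ t) t)
    (z w q : ℝ → ℂ) (a : ℂ)
    (hz : ∀ t, z t = ((H₁ t : ℂ) + Complex.I * (H₂ t : ℂ)) / 2)
    (hw : ∀ t, w t = (h₁ t : ℂ) + Complex.I * (h₂ t : ℂ))
    (ha : a = (a₁ : ℂ) + Complex.I * (a₂ : ℂ))
    (hq : ∀ t, q t = (z t)^2 - a * (w t - (k : ℂ) * a)) :
    (∀ t, HasDerivAt q (-Complex.I * (H₃ t : ℂ) * q t) t)
    ∧ ∀ t₁ t₂ : ℝ, q t₁ * (starRingEnd ℂ) (q t₁) = q t₂ * (starRingEnd ℂ) (q t₂) :=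
  kowalewski_integral_of_motion_general k a₁ a₂ h₁ h₂ h₃ H₁ H₂ H₃ e1 e2 e4 e5 z w q a hz hw ha hq
end

section
/- With P(x) = K̃₂ - 2K₃x + 2Hx² - x⁴, R₀(x,y) = K̃₂ - K₃(x+y) + H(x²+y²) - x²y² - (H-k)(x-y)², and R₁(x,y) = (H̃ - (x+y)²)(K̃₂ - x²y² - 2kxy) - (K₃ - (x+y)(xy+k))², where H̃ = 2H - 2k, we have R₀(x,y)² + (x-y)²R₁(x,y) = P(x)P(y) for all complex x, y. -/
theorem R0_R1_fundamental_relation (K₂' K₃ H k : ℂ) (x y : ℂ) :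
    (K₂' - K₃*(x + y) + H*(x^2 + y^2) - x^2*y^2 - (H - k)*(x - y)^2)^2
      + (x - y)^2 *
        (((2*H - 2*k) - (x + y)^2) * (K₂' - x^2*y^2 - 2*k*(x*y))
          - (K₃ - (x + y)*(x*y + k))^2)
      = (K₂' - 2*K₃*x + 2*H*x^2 - x^4) * (K₂' - 2*K₃*y + 2*H*y^2 - y^4) := by ring
end

section
/- Suppose x₃, y₃, q, x are complex numbers (with x̄ a second independent variable y) satisfying x₃² = H̃ - (x+y)² + (q+q̄), y₃² = K̃₂ - x²y² + x²q̄ + y²q - 2kxy, and x₃y₃ = K₃ - (x+y)(xy+k) + (xq̄ + yq), where qq̄ = K₄². Then (x₃x - y₃)² = P(x) + q(x-y)², where P(x) = K̃₂ - 2K₃x + 2Hx² - x⁴ and H̃ = 2H - 2k. -/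
theorem extremal_equation_reduction (H K₂' K₃ K₄ k x y q q' x₃ y₃ : ℂ)
    (hx₃ : x₃^2 = (2*H - 2*k) - (x + y)^2 + (q + q'))
    (hy₃ : y₃^2 = K₂' - x^2*y^2 + x^2*q' + y^2*q - 2*k*(x*y))
    (hx₃y₃ : x₃*y₃ = K₃ - (x + y)*(x*y + k) + (x*q' + y*q))
    (hK₄ : q*q' = K₄^2) :
    (x₃*x - y₃)^2 = (K₂' - 2*K₃*x + 2*H*x^2 - x^4) + q*(x - y)^2 := by linear_combination x^2*hx₃ - 2*x*hx₃y₃ + hy₃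
end

section
/- Under the hypotheses of the previous reduction, (x₃x - y₃)(x₃y - y₃) = R₀(x,y) where R₀(x,y) = K̃₂ - K₃(x+y) + H(x²+y²) - x²y² - (H-k)(x-y)²; i.e. the product ζζ̄ with ζ = x₃x - y₃, ζ̄ = x₃y - y₃ equals R₀. -/
theorem zeta_product_eq_R0 (H K₂' K₃ k x y q q' x₃ y₃ : ℂ)
    (hx₃ : x₃^2 = (2*H - 2*k) + (q + q') - (x + y)^2)
    (hy₃ : y₃^2 = K₂' - x^2*y^2 - 2*k*(x*y) + y^2*q + x^2*q')
    (hx₃y₃ : x₃*y₃ = K₃ + x*q' + y*q - (x + y)*(x*y + k)) :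
    (x₃*x - y₃) * (x₃*y - y₃)
      = K₂' - K₃*(x + y) + H*(x^2 + y^2) - x^2*y^2 - (H - k)*(x - y)^2 := by
  linear_combination x*y*hx₃ - (x+y)*hx₃y₃ + hy₃
end

section
/- For the limiting Hamiltonian system dH₁/dt = H₂H₃ - h₃a₂, dH₂/dt = -H₁H₃ + h₃a₁, dH₃/dt = h₁a₂ - h₂a₁, dh₁/dt = h₂H₃ - kH₃a₂, dh₂/dt = -h₁H₃ + kH₃a₁, dh₃/dt = k(H₁a₂ - H₂a₁), setting w = h₁ + ih₂ and a = a₁ + ia₂, one has d(w - ka)/dt = -iH₃(w - ka), and hence |w - ka|² is a constant of motion. -/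
open Complex

/-! The equations for `h₁, h₂` combine into `(w - k a)' = -i H₃ (w - k a)`: the velocity of
`w - k a` is a purely imaginary multiple of it, hence orthogonal to it, so `‖w - k a‖` is constant. -/

theorem norm_eq_of_inner_hasDerivAt_eq_zero {F : Type*} [NormedAddCommGroup F]
    [InnerProductSpace ℝ F] {f f' : ℝ → F} (hf : ∀ t, HasDerivAt f (f' t) t)
    (horth : ∀ t, inner ℝ (f t) (f' t) = 0) (t₁ t₂ : ℝ) : ‖f t₁‖ = ‖f t₂‖ := by
  have hsq : ∀ t, HasDerivAt (fun s => ‖f s‖ ^ 2) 0 t := fun t => by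
    simpa [horth t] using (hf t).norm_sq
  have hconst := is_const_of_deriv_eq_zero (fun t => (hsq t).differentiableAt)
    (fun t => (hsq t).deriv) t₁ t₂
  exact (pow_left_inj₀ (norm_nonneg _) (norm_nonneg _) two_ne_zero).mp hconst

theorem Complex.real_inner_mul_self_right (c z : ℂ) : inner ℝ z (c * z) = c.re * ‖z‖ ^ 2 := by
  rw [Complex.inner, mul_assoc, mul_conj, re_mul_ofReal, normSq_eq_norm_sq]

theorem limiting_case_integral_of_motion_general (k a₁ a₂ : ℝ)
    (h₁ h₂ H₃ : ℝ → ℝ)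
    (e4 : ∀ t, HasDerivAt h₁ (h₂ t * H₃ t - k * H₃ t * a₂) t)
    (e5 : ∀ t, HasDerivAt h₂ (-(h₁ t * H₃ t) + k * H₃ t * a₁) t)
    (w : ℝ → ℂ) (a : ℂ)
    (hw : ∀ t, w t = (h₁ t : ℂ) + Complex.I * (h₂ t : ℂ))
    (ha : a = (a₁ : ℂ) + Complex.I * (a₂ : ℂ)) :
    (∀ t, HasDerivAt (fun s => w s - (k : ℂ) * a)
        (-Complex.I * (H₃ t : ℂ) * (w t - (k : ℂ) * a)) t)
    ∧ ∀ t₁ t₂ : ℝ, ‖w t₁ - (k : ℂ) * a‖ ^ 2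
        = ‖w t₂ - (k : ℂ) * a‖ ^ 2 := by
  obtain rfl : w = fun t => (h₁ t : ℂ) + I * (h₂ t : ℂ) := funext hw
  subst ha
  have hderiv : ∀ t, HasDerivAt (fun s => (h₁ s : ℂ) + I * h₂ s - k * (a₁ + I * a₂))
      (-I * H₃ t * ((h₁ t : ℂ) + I * h₂ t - k * (a₁ + I * a₂))) t := fun t => by
    refine (((e4 t).ofReal_comp.add ((e5 t).ofReal_comp.const_mul I)).sub_const
      ((k : ℂ) * (a₁ + I * a₂))).congr_deriv ?_
    push_cast
    linear_combination (h₂ t * H₃ t - k * H₃ t * a₂ : ℂ) * Complex.I_sq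
  refine ⟨hderiv, fun t₁ t₂ => ?_⟩
  congr 1
  refine norm_eq_of_inner_hasDerivAt_eq_zero hderiv (fun t => ?_) t₁ t₂
  rw [Complex.real_inner_mul_self_right]
  simp

theorem limiting_case_integral_of_motion (k a₁ a₂ : ℝ)
    (h₁ h₂ h₃ H₁ H₂ H₃ : ℝ → ℝ)
    (e1 : ∀ t, HasDerivAt H₁ (H₂ t * H₃ t - h₃ t * a₂) t)
    (e2 : ∀ t, HasDerivAt H₂ (-(H₁ t * H₃ t) + h₃ t * a₁) t)
    (e3 : ∀ t, HasDerivAt H₃ (h₁ t * a₂ - h₂ t * a₁) t)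
    (e4 : ∀ t, HasDerivAt h₁ (h₂ t * H₃ t - k * H₃ t * a₂) t)
    (e5 : ∀ t, HasDerivAt h₂ (-(h₁ t * H₃ t) + k * H₃ t * a₁) t)
    (e6 : ∀ t, HasDerivAt h₃ (k * (H₁ t * a₂ - H₂ t * a₁)) t)
    (w : ℝ → ℂ) (a : ℂ)
    (hw : ∀ t, w t = (h₁ t : ℂ) + Complex.I * (h₂ t : ℂ))
    (ha : a = (a₁ : ℂ) + Complex.I * (a₂ : ℂ)) :
    (∀ t, HasDerivAt (fun s => w s - (k : ℂ) * a)
        (-Complex.I * (H₃ t : ℂ) * (w t - (k : ℂ) * a)) t)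
    ∧ ∀ t₁ t₂ : ℝ, ‖w t₁ - (k : ℂ) * a‖ ^ 2
        = ‖w t₂ - (k : ℂ) * a‖ ^ 2 :=
  limiting_case_integral_of_motion_general k a₁ a₂ h₁ h₂ H₃ e4 e5 w a hw ha
end
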